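/- arXiv:2108.10023 — 4 statements merged into one kernel-verified Lean document; each statement's English description precedes it below -/
import Mathlib

section
/- Suppose the operators V̂_k^α := (1/2) L̂_{2k} - (1/(2ℏ)) ∂/∂t_{2k+1+2α} + δ_{k,0}/16 are built from the Virasoro operators L̂_m (satisfying [L̂_k, L̂_m] = (k-m)L̂_{k+m} + (1/12)δ_{k,-m}(k³-k)) and the Heisenberg operators ∂/∂t_n. Then for k, m ≥ -α (with α ∈ {0,1}), [V̂_k^α, V̂_m^α] = (k-m) V̂_{k+m}^α. -/
/-!
Expanding bilinearly, `[V_k, V_m] = ¼[L_{2k}, L_{2m}] - (c/2)([L_{2k}, J_{2m+1+2α}] -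
[L_{2m}, J_{2k+1+2α}]) + c²[J_{2k+1+2α}, J_{2m+1+2α}]` with `c = 1/(2ℏ)`. The Heisenberg term
vanishes because both of its indices are `≥ 1`, and the mixed terms combine to
`(k - m) J_{2(k+m)+1+2α}`. The only subtle point is the central term at `m = -k`: the Virasoro
cocycle contributes `(8k³ - 2k)/48`, the shift `δ_{k,0}/16` requires `k/8`, and these agree
exactly when `k³ = k`, which `|k| ≤ α ≤ 1` guarantees.
-/

attribute [local instance] LieRing.ofAssociativeRing

theorem lie_sub_smul_add_smul_one {R A : Type*} [CommRing R] [Ring A] [Algebra R A]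
    (a b c₁ c₂ : R) (X₁ X₂ Y₁ Y₂ : A) :
    ⁅a • X₁ - b • Y₁ + c₁ • (1 : A), a • X₂ - b • Y₂ + c₂ • (1 : A)⁆ =
      (a * a) • ⁅X₁, X₂⁆ - (a * b) • (⁅X₁, Y₂⁆ - ⁅X₂, Y₁⁆) + (b * b) • ⁅Y₁, Y₂⁆ := by
  simp only [Ring.lie_def, mul_sub, sub_mul, mul_add, add_mul, smul_mul_assoc, mul_smul_comm,
    one_mul, mul_one]
  module

section HeisenbergVirasoro

variable {A : Type*} [Ring A] [Algebra ℂ A] {L J : ℤ → A}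

noncomputable def virasoroConstraint (L J : ℤ → A) (c : ℂ) (α k : ℤ) : A :=
  (1 / 2 : ℂ) • L (2 * k) - c • J (2 * k + 1 + 2 * α) + (if k = 0 then (1 : ℂ) / 16 else 0) • 1

theorem lie_virasoro_heisenberg_sub
    (hLJ : ∀ k n : ℤ, ⁅L k, J n⁆ = (-n : ℂ) • J (k + n)) (p q s : ℤ) :
    ⁅L p, J (q + s)⁆ - ⁅L q, J (p + s)⁆ = ((p - q : ℤ) : ℂ) • J (p + q + s) := by
  rw [hLJ, hLJ, ← add_assoc, add_left_comm q p s, ← add_assoc, ← sub_smul]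
  congr 1
  push_cast
  ring

theorem lie_virasoroConstraint
    (hLL : ∀ k m : ℤ, ⁅L k, L m⁆ = ((k - m : ℤ) : ℂ) • L (k + m)
        + (if k = -m then ((k : ℂ) ^ 3 - (k : ℂ)) / 12 else 0) • (1 : A))
    (hLJ : ∀ k n : ℤ, ⁅L k, J n⁆ = (-n : ℂ) • J (k + n))
    (hJJ : ∀ a b : ℤ, ⁅J a, J b⁆ = (if a = -b then (a : ℂ) else 0) • (1 : A))
    (c : ℂ) {α k m : ℤ} (hα : α ≤ 1) (hk : -α ≤ k) (hm : -α ≤ m) :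
    ⁅virasoroConstraint L J c α k, virasoroConstraint L J c α m⁆ =
      ((k - m : ℤ) : ℂ) • virasoroConstraint L J c α (k + m) := by
  have hJ : ⁅J (2 * k + 1 + 2 * α), J (2 * m + 1 + 2 * α)⁆ = 0 := by
    rw [hJJ, if_neg (by omega), zero_smul]
  have hL := lie_virasoro_heisenberg_sub hLJ (2 * k) (2 * m) (1 + 2 * α)
  simp only [← add_assoc, ← mul_add] at hL
  rw [virasoroConstraint, virasoroConstraint, lie_sub_smul_add_smul_one, hLL, hL, hJ,
    virasoroConstraint, ← mul_add]
  by_cases hkm : k = -m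
  · obtain rfl : m = -k := by omega
    have hk3 : (k : ℂ) ^ 3 = k := by
      obtain rfl | rfl | rfl : k = -1 ∨ k = 0 ∨ k = 1 := by omega
      all_goals norm_num
    rw [if_pos (by ring), if_pos (add_neg_cancel k)]
    match_scalars
    · ring
    · linear_combination (1 / 6 : ℂ) * hk3
    · ring
  · rw [if_neg (by omega), if_neg (by omega)]
    match_scalars <;> ring

end HeisenbergVirasoro

theorem virasoro_constraints_commutation_general
    (A : Type*) [Ring A] [Algebra ℂ A]
    (L J : ℤ → A) (ℏ : ℂ)
    (hLL : ∀ k m : ℤ, L k * L m - L m * L k =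
      ((k - m : ℤ) : ℂ) • L (k + m)
        + (if k = -m then ((k : ℂ)^3 - (k : ℂ)) / 12 else 0) • (1 : A))
    (hLJ : ∀ k n : ℤ, L k * J n - J n * L k = (-n : ℂ) • J (k + n))
    (hJJ : ∀ a b : ℤ, J a * J b - J b * J a =
      (if a = -b then (a : ℂ) else 0) • (1 : A))
    (α : ℤ) (hα : α = 0 ∨ α = 1)
    (V : ℤ → A)
    (hV : ∀ k : ℤ, V k = ((1 : ℂ)/2) • L (2*k)
      - (1 / (2*ℏ)) • J (2*k + 1 + 2*α)
      + (if k = 0 then (1 : ℂ)/16 else 0) • (1 : A)) :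
    ∀ k m : ℤ, -α ≤ k → -α ≤ m →
      V k * V m - V m * V k = ((k - m : ℤ) : ℂ) • V (k + m) := by
  intro k m hk hm
  obtain rfl : V = virasoroConstraint L J (1 / (2 * ℏ)) α := funext hV
  simp only [← Ring.lie_def] at hLL hLJ hJJ ⊢
  exact lie_virasoroConstraint hLL hLJ hJJ _ (by omega) hk hm

/-- The Virasoro constraint operators
`V̂_k^α = ½ L̂_{2k} - (1/(2ℏ)) Ĵ_{2k+1+2α} + δ_{k,0}/16`
built from operators `L̂, Ĵ` satisfying the Heisenberg–Virasoro relations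
(in an associative ℂ-algebra `A`, e.g. differential operators on
`ℂ[[t₁,t₂,…]]`, with `Ĵ_n = ∂/∂t_n` for `n > 0`) satisfy, for `α ∈ {0,1}`
and `k, m ≥ -α`, the relations `[V̂_k^α, V̂_m^α] = (k-m) V̂_{k+m}^α`. -/
theorem virasoro_constraints_commutation
    (A : Type*) [Ring A] [Algebra ℂ A]
    (L J : ℤ → A) (ℏ : ℂ) (hℏ : ℏ ≠ 0)
    (hLL : ∀ k m : ℤ, L k * L m - L m * L k =
      ((k - m : ℤ) : ℂ) • L (k + m)
        + (if k = -m then ((k : ℂ)^3 - (k : ℂ)) / 12 else 0) • (1 : A))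
    (hLJ : ∀ k n : ℤ, L k * J n - J n * L k = (-n : ℂ) • J (k + n))
    (hJJ : ∀ a b : ℤ, J a * J b - J b * J a =
      (if a = -b then (a : ℂ) else 0) • (1 : A))
    (α : ℤ) (hα : α = 0 ∨ α = 1)
    (V : ℤ → A)
    (hV : ∀ k : ℤ, V k = ((1 : ℂ)/2) • L (2*k)
      - (1 / (2*ℏ)) • J (2*k + 1 + 2*α)
      + (if k = 0 then (1 : ℂ)/16 else 0) • (1 : A)) :
    ∀ k m : ℤ, -α ≤ k → -α ≤ m →
      V k * V m - V m * V k = ((k - m : ℤ) : ℂ) • V (k + m) :=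
  virasoro_constraints_commutation_general A L J ℏ hLL hLJ hJJ α hα V hV
end

section
/- Let p, q be parameters with p, q, p+q nonzero, and define x(z) = ((p+q)/(pq)) log(1 + qz/√(p+q)) - (1/p) log(1 + √(p+q) z) and y₁(z) = (√(p+q)/p)(log(1 + √(p+q) z) - log(1 + qz/√(p+q))) as formal power series. Then they satisfy the identity p·exp(-q·x(z)) = (p+q)·exp((q/√(p+q))·y₁(z)) - q·exp(√(p+q)·y₁(z)). -/
open PowerSeries

/-!
With `s² = p + q`, the exponents are affine combinations of the two logarithms:
`(q/s) y₁ + q x = log (1 + (q/s) z)` and `s y₁ + q x = log (1 + s z)`.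
Hence `exp ((q/s) y₁) = exp (-q x) (1 + (q/s) z)` and `exp (s y₁) = exp (-q x) (1 + s z)`,
and the identity reduces to `(p + q)(1 + (q/s) z) - q (1 + s z) = p`, i.e. `(p + q)/s = s`.
Exponentials are handled through the first-order equations `E' = f' E`, whose solutions are
determined by their constant term.
-/

/-- The formal power series `log(1 + a z) = Σ_{n≥1} (-1)^{n-1} aⁿ zⁿ / n`. -/
noncomputable def logOneAdd (a : ℂ) : PowerSeries ℂ :=
  PowerSeries.mk fun n => if n = 0 then 0 else (-1)^(n+1) * a^n / n

namespace PowerSeries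

variable {R : Type*}

theorem derivative_one_add_C_mul_X [CommSemiring R] (a : R) : d⁄dX R (1 + C a * X) = C a := by
  simp

variable [CommRing R]

theorem eq_of_derivative_eq_mul_self [IsAddTorsionFree R] {g F G : R⟦X⟧}
    (h0 : constantCoeff F = constantCoeff G)
    (hF : d⁄dX R F = g * F) (hG : d⁄dX R G = g * G) : F = G := by
  ext n
  induction n using Nat.strong_induction_on with
  | _ n ih =>
    cases n with
    | zero => simpa using h0
    | succ n =>
      have hmul : coeff n (g * F) = coeff n (g * G) := by
        rw [coeff_mul, coeff_mul]
        refine Finset.sum_congr rfl fun ij hij => ?_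
        rw [ih ij.2 (Finset.Nat.antidiagonal.snd_lt hij)]
      have hsucc := congrArg (coeff n) hF ▸ congrArg (coeff n) hG ▸ hmul
      rw [coeff_derivative, coeff_derivative, mul_comm, ← Nat.cast_succ, ← nsmul_eq_mul,
        mul_comm, ← nsmul_eq_mul] at hsucc
      exact nsmul_right_injective (Nat.succ_ne_zero n) hsucc

theorem derivative_mul_eq_mul_self {f g F u : R⟦X⟧} (hF : d⁄dX R F = d⁄dX R f * F)
    (hu : d⁄dX R (g - f) * u = d⁄dX R u) : d⁄dX R (F * u) = d⁄dX R g * (F * u) := by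
  rw [Derivation.leibniz, smul_eq_mul, smul_eq_mul, hF, ← hu, map_sub]
  ring

end PowerSeries

theorem coeff_derivative_logOneAdd (a : ℂ) (n : ℕ) :
    coeff n (d⁄dX ℂ (logOneAdd a)) = (-1) ^ n * a ^ (n + 1) := by
  rw [coeff_derivative, logOneAdd, coeff_mk, if_neg n.succ_ne_zero, Nat.cast_succ,
    div_mul_cancel₀ _ (Nat.cast_add_one_ne_zero n), pow_succ]
  ring

theorem derivative_logOneAdd_mul (a : ℂ) :
    d⁄dX ℂ (logOneAdd a) * (1 + C a * X) = d⁄dX ℂ (1 + C a * X) := by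
  rw [derivative_one_add_C_mul_X]
  ext n
  cases n with
  | zero => simpa using coeff_derivative_logOneAdd a 0
  | succ n =>
    simp only [mul_add, mul_one, map_add, ← mul_assoc, coeff_succ_mul_X, coeff_C_mul,
      mul_comm _ (C a), coeff_derivative_logOneAdd, coeff_succ_C]
    ring

/-- Formally, `exp (f + log (1 + a z)) = exp f * (1 + a z)`. -/
theorem eq_mul_one_add_of_sub_eq_logOneAdd {a : ℂ} {f g F G : ℂ⟦X⟧}
    (hfg : g - f = logOneAdd a) (hF : d⁄dX ℂ F = d⁄dX ℂ f * F)
    (hG : d⁄dX ℂ G = d⁄dX ℂ g * G) (h0 : constantCoeff G = constantCoeff F) :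
    G = F * (1 + C a * X) := by
  refine eq_of_derivative_eq_mul_self (by simp [h0]) hG ?_
  exact derivative_mul_eq_mul_self hF (hfg ▸ derivative_logOneAdd_mul a)

/-- The spectral curve identity
`p exp(-q x(z)) = (p+q) exp((q/√(p+q)) y₁(z)) - q exp(√(p+q) y₁(z))`,
where (with `s = √(p+q)`, `p, q, p+q ≠ 0`)
`x(z) = ((p+q)/(pq)) log(1 + qz/s) - (1/p) log(1 + sz)` and
`y₁(z) = (s/p)(log(1 + sz) - log(1 + qz/s))`.
The formal exponentials `A = exp(-q x)`, `E₁ = exp((q/s) y₁)`,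
`E₂ = exp(s y₁)` are characterized as the unique formal power series with
constant term `1` satisfying `A' = (-q x)' A`, `E₁' = ((q/s) y₁)' E₁`,
`E₂' = (s y₁)' E₂`. -/
theorem spectral_curve_exponential_identity
    (p q s : ℂ) (hp : p ≠ 0) (hq : q ≠ 0) (hs : s ≠ 0) (hsq : s^2 = p + q)
    (x y₁ A E₁ E₂ : PowerSeries ℂ)
    (hx : x = C ((p + q)/(p*q)) * logOneAdd (q/s) - C (1/p) * logOneAdd s)
    (hy : y₁ = C (s/p) * (logOneAdd s - logOneAdd (q/s)))
    (hA0 : constantCoeff A = 1) (hA : d⁄dX ℂ A = d⁄dX ℂ (C (-q) * x) * A)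
    (hE10 : constantCoeff E₁ = 1) (hE1 : d⁄dX ℂ E₁ = d⁄dX ℂ (C (q/s) * y₁) * E₁)
    (hE20 : constantCoeff E₂ = 1) (hE2 : d⁄dX ℂ E₂ = d⁄dX ℂ (C s * y₁) * E₂) :
    C p * A = C (p + q) * E₁ - C q * E₂ := by
  have h₁ : C (q/s) * y₁ - C (-q) * x = logOneAdd (q/s) := by
    ext n
    simp only [hx, hy, map_sub, coeff_C_mul]
    field_simp
    ring
  have h₂ : C s * y₁ - C (-q) * x = logOneAdd s := by
    ext n
    simp only [hx, hy, map_sub, coeff_C_mul]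
    field_simp
    linear_combination (coeff n (logOneAdd s) - coeff n (logOneAdd (q / s))) * hsq
  rw [eq_mul_one_add_of_sub_eq_logOneAdd h₁ hA hE1 (hE10.trans hA0.symm),
    eq_mul_one_add_of_sub_eq_logOneAdd h₂ hA hE2 (hE20.trans hA0.symm)]
  have hc : (p + q) * (q / s) = q * s := by
    field_simp
    linear_combination -hsq
  have hcomb : C (p + q) * (1 + C (q / s) * X) - C q * (1 + C s * X) = C p := by
    rw [mul_add, mul_add, ← mul_assoc, ← mul_assoc, ← map_mul, ← map_mul, hc, map_add]
    ring
  linear_combination (-A) * hcomb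
end

section
/- Define h̃(z) = (p/(q√(p+q))) · (exp(2qz/√(p+q)) - 1)/(1 - exp(-2pz/√(p+q))) - 1/√(p+q) as a formal power series in z (for p, q, p+q nonzero). Then h̃(z) = z + Σ_{k≥2} (c_k/(p+q)^{(k-1)/2}) z^k where each c_k ∈ Q[p,q] is a polynomial of total degree k-1; in particular the compositional inverse f̃(z) of h̃ begins f̃(z) = z - (1/3)((p+2q)/√(p+q)) z² + ((2p² + 5pq + 5q²)/(9(p+q))) z³ + O(z⁴). -/
open PowerSeries

/-- `exp(c z)` as a formal power series. -/
noncomputable def expc (c : ℂ) : PowerSeries ℂ :=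
  PowerSeries.mk fun n => c^n / n.factorial

/-- Composition `f ∘ g` of formal power series (`g` with zero constant
term): the coefficient of `z^m` is `Σ_{n≤m} fₙ · [z^m] gⁿ`. -/
noncomputable def pcomp (f g : PowerSeries ℂ) : PowerSeries ℂ :=
  PowerSeries.mk fun m => ∑ n ∈ Finset.range (m+1), coeff n f * coeff m (g^n)

/-!
Multiplying through by the denominator identifies `h̃ = s⁻¹ (B(2pz/s) · E(2qz/s) - 1)`, where
`B(x) = x / (1 - e^{-x}) = Σ B'ₙ xⁿ / n!` is the Bernoulli generating series and
`E(x) = (eˣ - 1) / x`. Hence `[z^k] h̃ = s^{-(k+1)} Σᵢ αₖᵢ pⁱ q^{k-i}` with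
`αₖᵢ = 2ᵏ B'ᵢ / (i! (k+1-i)!)`. Since `(-1)ⁱ B'ᵢ = Bᵢ` and `Σᵢ≤ₖ C(k+1,i) Bᵢ = 0`, this binary
form vanishes at `p = -q`, so synthetic division by `p + q = s²` produces `c_k`, whose
coefficients are the alternating partial sums of the `αₖᵢ`. The first coefficients of `f̃` come
from comparing coefficients of `z`, `z²`, `z³` in `h̃(f̃(z)) = z`.
-/

open Finset

lemma expc_eq_rescale_exp (c : ℂ) : expc c = rescale c (exp ℂ) := by
  ext n
  simp [expc, coeff_exp, eq_ratCast (algebraMap ℚ ℂ), div_eq_mul_inv]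

lemma one_sub_expc_ne_zero {c : ℂ} (hc : c ≠ 0) : 1 - expc c ≠ 0 := by
  intro h
  have h1 := congrArg (coeff 1) h
  simp [expc, coeff_one, hc] at h1

/-- `exprel (a z) = (e^{a z} - 1) / (a z)`, which is a power series also for `a = 0`. -/
noncomputable def exprelc (a : ℂ) : PowerSeries ℂ := mk fun j => a ^ j / (j + 1).factorial

lemma C_mul_X_mul_exprelc (a : ℂ) : C a * X * exprelc a = expc a - 1 := by
  ext n
  cases n with
  | zero => simp [expc, exprelc]
  | succ n =>
    rw [mul_assoc, coeff_C_mul, coeff_succ_X_mul, exprelc, coeff_mk, expc, map_sub, coeff_mk,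
      coeff_one, if_neg n.succ_ne_zero, sub_zero, pow_succ]
    ring

lemma rescale_bernoulli'PowerSeries_mul (b : ℂ) :
    rescale b (bernoulli'PowerSeries ℂ) * (1 - expc (-b)) = C b * X := by
  have hexp : exp ℂ * rescale (-1) (exp ℂ) = 1 := exp_mul_exp_neg_eq_one
  have hB : bernoulli'PowerSeries ℂ * (1 - rescale (-1) (exp ℂ)) = X := by
    linear_combination rescale (-1) (exp ℂ) * bernoulli'PowerSeries_mul_exp_sub_one ℂ
      + (X - bernoulli'PowerSeries ℂ) * hexp
  have := congrArg (rescale b) hB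
  rwa [map_mul, map_sub, map_one, rescale_rescale, rescale_X, neg_one_mul,
    ← expc_eq_rescale_exp] at this

noncomputable def htildeSeries (p q s : ℂ) : PowerSeries ℂ :=
  C s⁻¹ * (rescale (2 * p / s) (bernoulli'PowerSeries ℂ) * exprelc (2 * q / s) - 1)

lemma htildeSeries_mul_one_sub_expc {p q s : ℂ} (hq : q ≠ 0) (hs : s ≠ 0) :
    htildeSeries p q s * (1 - expc (-2 * p / s))
      = C (p / (q * s)) * (expc (2 * q / s) - 1) - C (1 / s) * (1 - expc (-2 * p / s)) := by
  have hB := rescale_bernoulli'PowerSeries_mul (2 * p / s)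
  have hE := C_mul_X_mul_exprelc (2 * q / s)
  have hC : C s⁻¹ * C (2 * p / s) = C (p / (q * s)) * C (2 * q / s) := by
    rw [← map_mul, ← map_mul]
    congr 1
    field_simp
  rw [htildeSeries, show -2 * p / s = -(2 * p / s) by ring, one_div]
  linear_combination (C s⁻¹ * exprelc (2 * q / s)) * hB + C (p / (q * s)) * hE
    + (X * exprelc (2 * q / s)) * hC

lemma eq_htildeSeries {p q s : ℂ} (hp : p ≠ 0) (hq : q ≠ 0) (hs : s ≠ 0) {h : PowerSeries ℂ}
    (hh : h * (1 - expc (-2 * p / s))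
      = C (p / (q * s)) * (expc (2 * q / s) - 1) - C (1 / s) * (1 - expc (-2 * p / s))) :
    h = htildeSeries p q s :=
  mul_right_cancel₀ (one_sub_expc_ne_zero (by simp [hp, hs]))
    (hh.trans (htildeSeries_mul_one_sub_expc hq hs).symm)

lemma coeff_zero_htildeSeries (p q s : ℂ) : coeff 0 (htildeSeries p q s) = 0 := by
  simp [htildeSeries, coeff_mul, exprelc, bernoulli'PowerSeries, coeff_rescale]

def bernoulliCoeff (k i : ℕ) : ℚ := 2 ^ k * bernoulli' i / (i.factorial * (k + 1 - i).factorial)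

lemma coeff_htildeSeries {p q s : ℂ} (hs : s ≠ 0) {k : ℕ} (hk : 1 ≤ k) :
    coeff k (htildeSeries p q s)
      = (∑ i ∈ range (k + 1), (bernoulliCoeff k i : ℂ) * p ^ i * q ^ (k - i)) / s ^ (k + 1) := by
  rw [htildeSeries, coeff_C_mul, map_sub, coeff_one, if_neg (by omega), sub_zero, coeff_mul,
    Nat.sum_antidiagonal_eq_sum_range_succ (fun i j => coeff i _ * coeff j _), mul_sum, sum_div]
  refine sum_congr rfl fun i hi => ?_
  obtain ⟨j, rfl⟩ : ∃ j, k = i + j := ⟨k - i, by have := mem_range.1 hi; omega⟩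
  simp only [coeff_rescale, bernoulli'PowerSeries, exprelc, coeff_mk, bernoulliCoeff,
    eq_ratCast (algebraMap ℚ ℂ), Nat.add_sub_cancel_left, show i + j + 1 - i = j + 1 by omega]
  push_cast
  rw [div_pow, div_pow, pow_succ]
  field_simp
  ring

section SyntheticDivision

variable {R : Type*} [CommRing R]

def synthQuot (a : ℕ → R) (m : ℕ) : R := (-1) ^ m * ∑ i ∈ range (m + 1), (-1) ^ i * a i

lemma synthQuot_zero (a : ℕ → R) : synthQuot a 0 = a 0 := by simp [synthQuot]

lemma synthQuot_succ (a : ℕ → R) (m : ℕ) : synthQuot a (m + 1) = a (m + 1) - synthQuot a m := by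
  have h : ((-1 : R)) ^ m * (-1) ^ m = 1 := by rw [← mul_pow]; norm_num
  simp only [synthQuot, sum_range_succ, pow_succ]
  linear_combination (a (m + 1)) * h

lemma map_synthQuot {S : Type*} [CommRing S] (f : R →+* S) (a : ℕ → R) (m : ℕ) :
    f (synthQuot a m) = synthQuot (f ∘ a) m := by
  simp [synthQuot, map_sum]

lemma add_mul_sum_synthQuot (a : ℕ → R) (x y : R) (k : ℕ) :
    (x + y) * ∑ m ∈ range k, synthQuot a m * x ^ m * y ^ (k - 1 - m)
      = ∑ i ∈ range (k + 1), a i * x ^ i * y ^ (k - i) - synthQuot a k * x ^ k := by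
  induction k with
  | zero => simp [synthQuot_zero]
  | succ k ih =>
    have hq : ∑ m ∈ range (k + 1), synthQuot a m * x ^ m * y ^ (k + 1 - 1 - m)
        = y * ∑ m ∈ range k, synthQuot a m * x ^ m * y ^ (k - 1 - m) + synthQuot a k * x ^ k := by
      rw [sum_range_succ, mul_sum, Nat.add_sub_cancel, Nat.sub_self, pow_zero, mul_one]
      congr 1
      refine sum_congr rfl fun m hm => ?_
      rw [show k - m = k - 1 - m + 1 by have := mem_range.1 hm; omega, pow_succ]
      ring
    have ha : ∑ i ∈ range (k + 1 + 1), a i * x ^ i * y ^ (k + 1 - i)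
        = y * ∑ i ∈ range (k + 1), a i * x ^ i * y ^ (k - i) + a (k + 1) * x ^ (k + 1) := by
      rw [sum_range_succ, mul_sum, Nat.sub_self, pow_zero, mul_one]
      congr 1
      refine sum_congr rfl fun i hi => ?_
      rw [show k + 1 - i = k - i + 1 by have := mem_range.1 hi; omega, pow_succ]
      ring
    rw [hq, ha, synthQuot_succ]
    linear_combination y * ih

end SyntheticDivision

lemma sum_neg_one_pow_mul_bernoulliCoeff {k : ℕ} (hk : 1 ≤ k) :
    ∑ i ∈ range (k + 1), (-1) ^ i * bernoulliCoeff k i = 0 := by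
  have hterm : ∀ i ∈ range (k + 1), (-1 : ℚ) ^ i * bernoulliCoeff k i
      = 2 ^ k / (k + 1).factorial * ((k + 1).choose i * bernoulli i) := by
    intro i hi
    have hik : i ≤ k + 1 := by have := mem_range.1 hi; omega
    rw [bernoulliCoeff, bernoulli, Nat.cast_choose ℚ hik]
    field_simp
  rw [sum_congr rfl hterm, ← mul_sum, sum_bernoulli, if_neg (by omega), mul_zero]

lemma synthQuot_bernoulliCoeff_self {k : ℕ} (hk : 1 ≤ k) :
    synthQuot (bernoulliCoeff k) k = 0 := by
  rw [synthQuot, sum_neg_one_pow_mul_bernoulliCoeff hk, mul_zero]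

noncomputable def htildeCoeffPoly (k : ℕ) : MvPolynomial (Fin 2) ℚ :=
  ∑ m ∈ range k, MvPolynomial.C (synthQuot (bernoulliCoeff k) m) *
    MvPolynomial.X 0 ^ m * MvPolynomial.X 1 ^ (k - 1 - m)

lemma totalDegree_htildeCoeffPoly_le (k : ℕ) : (htildeCoeffPoly k).totalDegree ≤ k - 1 := by
  refine MvPolynomial.totalDegree_finsetSum_le fun m hm => ?_
  have hmk := mem_range.1 hm
  grw [MvPolynomial.totalDegree_mul, MvPolynomial.totalDegree_mul, MvPolynomial.totalDegree_C,
    MvPolynomial.totalDegree_X_pow, MvPolynomial.totalDegree_X_pow]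
  omega

lemma add_mul_aeval_htildeCoeffPoly {k : ℕ} (hk : 1 ≤ k) (p q : ℂ) :
    (p + q) * MvPolynomial.aeval ![p, q] (htildeCoeffPoly k)
      = ∑ i ∈ range (k + 1), (bernoulliCoeff k i : ℂ) * p ^ i * q ^ (k - i) := by
  have hcast : ∀ m, ((synthQuot (bernoulliCoeff k) m : ℚ) : ℂ)
      = synthQuot (fun i => (bernoulliCoeff k i : ℂ)) m :=
    map_synthQuot (Rat.castHom ℂ) _
  have heval : MvPolynomial.aeval ![p, q] (htildeCoeffPoly k)
      = ∑ m ∈ range k, synthQuot (fun i => (bernoulliCoeff k i : ℂ)) m * p ^ m * q ^ (k - 1 - m) := by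
    simp [htildeCoeffPoly, ← hcast, eq_ratCast (algebraMap ℚ ℂ)]
  rw [heval, add_mul_sum_synthQuot, ← hcast, synthQuot_bernoulliCoeff_self hk]
  simp

lemma coeff_htildeSeries_eq_aeval {p q s : ℂ} (hs : s ≠ 0) (hs2 : s ^ 2 = p + q) {k : ℕ}
    (hk : 1 ≤ k) :
    coeff k (htildeSeries p q s) = MvPolynomial.aeval ![p, q] (htildeCoeffPoly k) / s ^ (k - 1) := by
  rw [coeff_htildeSeries hs hk, ← add_mul_aeval_htildeCoeffPoly hk, ← hs2,
    show k + 1 = 2 + (k - 1) by omega, pow_add]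
  field_simp

lemma coeff_eq_of_pcomp_eq_X {h g : PowerSeries ℂ} (h0 : coeff 0 h = 0) (h1 : coeff 1 h = 1)
    (g0 : coeff 0 g = 0) (hg : pcomp h g = X) :
    coeff 1 g = 1 ∧ coeff 2 g = -coeff 2 h ∧ coeff 3 g = 2 * coeff 2 h ^ 2 - coeff 3 h := by
  obtain ⟨u, rfl⟩ := X_dvd_iff.mpr (by simpa using g0)
  have e : ∀ m, ∑ n ∈ range (m + 1), coeff n h * coeff m ((X * u) ^ n) = coeff m X := fun m => by
    simpa only [pcomp, coeff_mk] using congrArg (coeff m) hg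
  have e1 := e 1
  have e2 := e 2
  have e3 := e 3
  simp only [sum_range_succ, range_one, sum_singleton, mul_pow, coeff_X_pow_mul', coeff_X,
    coeff_one_pow, ↓reduceIte, Nat.reduceAdd, Nat.reduceSub, Nat.reduceLeDiff, Nat.reduceEqDiff,
    tsub_self, pow_zero, pow_one, coeff_one, coeff_zero_eq_constantCoeff, map_pow, h0, h1, zero_mul,
    one_mul, zero_add, Nat.cast_ofNat] at e1 e2 e3
  rw [e1] at e2 e3
  rw [coeff_succ_X_mul, coeff_succ_X_mul, coeff_succ_X_mul, coeff_zero_eq_constantCoeff_apply]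
  exact ⟨e1, by linear_combination e2, by linear_combination e3 - 2 * coeff 2 h * e2⟩

/-- The series
`h̃(z) = (p/(q√(p+q))) (e^{2qz/√(p+q)} - 1)/(1 - e^{-2pz/√(p+q)}) - 1/√(p+q)`
(characterized below, with `s = √(p+q)`, by multiplying through by the
denominator `1 - e^{-2pz/s}`) has the form
`h̃(z) = z + Σ_{k≥2} (c_k/(p+q)^{(k-1)/2}) z^k` with `c_k ∈ ℚ[p,q]` a
polynomial of total degree `≤ k-1`, and its compositional inverse `f̃`
begins `f̃(z) = z - (1/3)((p+2q)/√(p+q)) z² + ((2p²+5pq+5q²)/(9(p+q))) z³ + O(z⁴)`. -/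
theorem htilde_coefficients_and_inverse :
    ∃ c : ℕ → MvPolynomial (Fin 2) ℚ,
      (∀ k : ℕ, (c k).totalDegree ≤ k - 1) ∧
      ∀ (p q s : ℂ), p ≠ 0 → q ≠ 0 → s ≠ 0 → s^2 = p + q →
      ∀ h : PowerSeries ℂ,
        h * (1 - expc (-2*p/s))
          = C (p/(q*s)) * (expc (2*q/s) - 1) - C (1/s) * (1 - expc (-2*p/s)) →
        (coeff 0 h = 0 ∧ coeff 1 h = 1 ∧
         (∀ k : ℕ, 2 ≤ k →
            coeff k h = (MvPolynomial.aeval ![p, q] (c k)) / s^(k-1)) ∧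
         ∀ ft : PowerSeries ℂ, coeff 0 ft = 0 → pcomp h ft = X →
           (coeff 1 ft = 1 ∧
            coeff 2 ft = -(1/3) * (p + 2*q) / s ∧
            coeff 3 ft = (2*p^2 + 5*p*q + 5*q^2) / (9*(p + q)))) := by
  refine ⟨htildeCoeffPoly, totalDegree_htildeCoeffPoly_le, fun p q s hp hq hs hs2 h hh => ?_⟩
  obtain rfl := eq_htildeSeries hp hq hs hh
  have hpq : p + q ≠ 0 := hs2 ▸ pow_ne_zero 2 hs
  have hcoeff : ∀ k, 1 ≤ k → coeff k (htildeSeries p q s)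
      = MvPolynomial.aeval ![p, q] (htildeCoeffPoly k) / s ^ (k - 1) :=
    fun k => coeff_htildeSeries_eq_aeval hs hs2
  have h1 : coeff 1 (htildeSeries p q s) = 1 := by
    simp [hcoeff 1 le_rfl, htildeCoeffPoly, synthQuot, bernoulliCoeff]
  have h2 : coeff 2 (htildeSeries p q s) = (p + 2 * q) / (3 * s) := by
    rw [hcoeff 2 (by norm_num)]
    norm_num [htildeCoeffPoly, synthQuot, bernoulliCoeff, sum_range_succ, Nat.factorial]
    field_simp
    ring
  have h3 : coeff 3 (htildeSeries p q s) = q / 3 := by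
    rw [hcoeff 3 (by norm_num)]
    norm_num [htildeCoeffPoly, synthQuot, bernoulliCoeff, sum_range_succ, Nat.factorial, hs2]
    field_simp
    ring
  refine ⟨coeff_zero_htildeSeries p q s, h1, fun k hk => hcoeff k (by omega), fun g g0 hg => ?_⟩
  obtain ⟨g1, g2, g3⟩ := coeff_eq_of_pcomp_eq_X (coeff_zero_htildeSeries p q s) h1 g0 hg
  refine ⟨g1, by rw [g2, h2]; ring, ?_⟩
  rw [g3, h2, h3, div_pow, mul_pow, hs2]
  field_simp
  ring
end

section
/- Let h̃(z) = (p/(q√(p+q)))·(e^{2qz/√(p+q)} - 1)/(1 - e^{-2pz/√(p+q)}) - 1/√(p+q), let f(z) be the formal series with f(z)²/2 = x(z) := ((p+q)/(pq)) log(1 + qz/√(p+q)) - (1/p) log(1 + √(p+q)z), let h be the compositional inverse of f, and define Y(z) = (1/2)(y₁(h(z)) - y₁(h(-z))) where y₁(z) = (√(p+q)/p)(log(1+√(p+q)z) - log(1+qz/√(p+q))). Then f(h̃(Y(z))) = z as formal power series. -/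
open PowerSeries

/-!
Write `W = y₁ ∘ h` and `V(z) = W(-z)`, so that `W = V + 2Y`. With `x = f²/2` one has
`log(1 + sz) = q·x + s·y₁` and `log(1 + qz/s) = q·x + (q/s)·y₁`; composing with `h` (so that
`x ∘ h = z²/2`) and exponentiating gives `1 + s·h = P·e^{sW}` and `1 + (q/s)·h = P·e^{(q/s)W}`,
where `P = e^{qz²/2}` is even. Replacing `z` by `-z` gives the same two identities for `h(-z)`
with `V` in place of `W`. Eliminating `P`, `e^{sV}`, `e^{(q/s)V}` and `h(-z)` from these four
identities leaves a linear equation for `h` whose coefficients are polynomials in `e^{2sY}` and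
`e^{2qY/s}`, and `h̃ ∘ Y` satisfies the same equation. So `h̃ ∘ Y = h`, and `f ∘ h̃ ∘ Y = z`.
-/

namespace PowerSeries

section Subst

variable {R : Type*} [CommRing R]

theorem coeff_pow_eq_zero_of_lt {g : R⟦X⟧} (hg : constantCoeff g = 0) {m n : ℕ} (h : m < n) :
    coeff m (g ^ n) = 0 :=
  coeff_of_lt_order _ ((Nat.cast_lt.mpr h).trans_le (le_order_pow_of_constantCoeff_eq_zero n hg))

theorem coeff_subst_eq_sum {g : R⟦X⟧} (hg : constantCoeff g = 0) (f : R⟦X⟧) (m : ℕ) :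
    coeff m (f.subst g) = ∑ n ∈ Finset.range (m + 1), coeff n f * coeff m (g ^ n) := by
  rw [coeff_subst' (HasSubst.of_constantCoeff_zero' hg), finsum_eq_sum_of_support_subset]
  · rfl
  · intro n hn
    rw [Function.mem_support] at hn
    simp only [Finset.coe_range, Set.mem_Iio]
    by_contra! hle
    exact hn (by rw [coeff_pow_eq_zero_of_lt hg (by omega), smul_zero])

theorem constantCoeff_subst_of_constantCoeff_eq_zero {g : R⟦X⟧} (hg : constantCoeff g = 0)
    (f : R⟦X⟧) : constantCoeff (f.subst g) = constantCoeff f := by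
  rw [← coeff_zero_eq_constantCoeff_apply, ← coeff_zero_eq_constantCoeff_apply,
    coeff_subst_eq_sum hg]
  simp

theorem coeff_one_subst {g : R⟦X⟧} (hg : constantCoeff g = 0) (f : R⟦X⟧) :
    coeff 1 (f.subst g) = coeff 1 f * coeff 1 g := by
  simp [coeff_subst_eq_sum hg, Finset.sum_range_succ]

theorem coeff_one_ne_zero_of_subst_eq_X [Nontrivial R] {f g : R⟦X⟧} (hg : constantCoeff g = 0)
    (hfg : f.subst g = X) : coeff 1 g ≠ 0 := by
  intro h1
  simpa [coeff_one_subst hg, h1] using congrArg (coeff 1) hfg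

theorem subst_one (g : R⟦X⟧) : (1 : R⟦X⟧).subst g = 1 :=
  (subst_C (a := g) (1 : R)).trans (map_one _)

theorem subst_C_mul {g : R⟦X⟧} (hg : constantCoeff g = 0) (a : R) (f : R⟦X⟧) :
    (C a * f).subst g = C a * f.subst g := by
  rw [subst_mul (HasSubst.of_constantCoeff_zero' hg), subst_C]
  rfl

theorem rescale_C_mul (r a : R) (f : R⟦X⟧) : rescale r (C a * f) = C a * rescale r f := by
  ext n
  simp only [coeff_rescale, coeff_C_mul]
  ring

theorem rescale_subst {g : R⟦X⟧} (hg : constantCoeff g = 0) (r : R) (f : R⟦X⟧) :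
    rescale r (f.subst g) = f.subst (rescale r g) := by
  rw [rescale_eq_subst, rescale_eq_subst,
    subst_comp_subst_apply (HasSubst.of_constantCoeff_zero' hg) (HasSubst.smul_X' r)]

end Subst

section Exp

variable {A : Type*} [CommRing A] [Algebra ℚ A]

noncomputable def expOf (g : A⟦X⟧) : A⟦X⟧ := (exp A).subst g

variable {g u v : A⟦X⟧}

theorem constantCoeff_expOf (hg : constantCoeff g = 0) : constantCoeff (expOf g) = 1 := by
  rw [expOf, constantCoeff_subst_of_constantCoeff_eq_zero hg, constantCoeff_exp]

theorem coeff_one_expOf (hg : constantCoeff g = 0) : coeff 1 (expOf g) = coeff 1 g := by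
  simp [expOf, coeff_one_subst hg]

theorem derivative_expOf (hg : constantCoeff g = 0) :
    d⁄dX A (expOf g) = expOf g * d⁄dX A g := by
  rw [expOf, derivative_subst (HasSubst.of_constantCoeff_zero' hg), derivative_exp]

theorem subst_expOf {h : A⟦X⟧} (hg : constantCoeff g = 0) (hh : constantCoeff h = 0) :
    (expOf g).subst h = expOf (g.subst h) :=
  subst_comp_subst_apply (HasSubst.of_constantCoeff_zero' hg)
    (HasSubst.of_constantCoeff_zero' hh) _

theorem rescale_expOf (hg : constantCoeff g = 0) (r : A) :
    rescale r (expOf g) = expOf (rescale r g) :=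
  rescale_subst hg r _

theorem one_add_X_mul_derivative_log : (1 + X) * d⁄dX A (log A) = 1 := by
  ext n
  rw [deriv_log, add_mul, one_mul, map_add]
  cases n with
  | zero => simp
  | succ n => simp [pow_succ]

variable [IsAddTorsionFree A]

theorem expOf_mul_expOf_neg (hu : constantCoeff u = 0) : expOf u * expOf (-u) = 1 := by
  have hnu : constantCoeff (-u) = 0 := by rw [map_neg, hu, neg_zero]
  refine derivative.ext ?_ ?_
  · rw [Derivation.leibniz, derivative_expOf hu, derivative_expOf hnu, map_neg, derivative_one]
    simp only [smul_eq_mul]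
    ring
  · rw [map_mul, constantCoeff_expOf hu, constantCoeff_expOf hnu, map_one, mul_one]

theorem eq_expOf_of_derivative_eq_mul {F : A⟦X⟧} (hu : constantCoeff u = 0)
    (hF : d⁄dX A F = F * d⁄dX A u) (hF0 : constantCoeff F = 1) : F = expOf u := by
  have hnu : constantCoeff (-u) = 0 := by rw [map_neg, hu, neg_zero]
  have hinv : F * expOf (-u) = 1 := by
    refine derivative.ext ?_ ?_
    · rw [Derivation.leibniz, hF, derivative_expOf hnu, map_neg, derivative_one]
      simp only [smul_eq_mul]
      ring
    · rw [map_mul, hF0, constantCoeff_expOf hnu, map_one, mul_one]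
  calc F = F * (expOf u * expOf (-u)) := by rw [expOf_mul_expOf_neg hu, mul_one]
    _ = expOf u := by rw [mul_left_comm, hinv, mul_one]

theorem expOf_add (hu : constantCoeff u = 0) (hv : constantCoeff v = 0) :
    expOf (u + v) = expOf u * expOf v := by
  refine (eq_expOf_of_derivative_eq_mul (by rw [map_add, hu, hv, add_zero]) ?_ ?_).symm
  · rw [Derivation.leibniz, derivative_expOf hu, derivative_expOf hv, map_add, smul_eq_mul,
      smul_eq_mul]
    ring
  · rw [map_mul, constantCoeff_expOf hu, constantCoeff_expOf hv, mul_one]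

theorem expOf_C_mul_mul_expOf_C_mul (hg : constantCoeff g = 0) (a b : A) :
    expOf (C a * g) * expOf (C b * g) = expOf (C (a + b) * g) := by
  rw [← expOf_add (by simp [hg]) (by simp [hg]), map_add, add_mul]

theorem expOf_log : expOf (log A) = 1 + X := by
  refine (eq_expOf_of_derivative_eq_mul constantCoeff_log ?_ (by simp)).symm
  rw [one_add_X_mul_derivative_log]
  simp

end Exp

theorem expOf_C_mul_sub_expOf_C_mul_ne_zero {K : Type*} [Field K] [CharZero K] {g : K⟦X⟧}
    (hg : constantCoeff g = 0) (hg1 : coeff 1 g ≠ 0) {a b : K} (hab : a ≠ b) :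
    expOf (C a * g) - expOf (C b * g) ≠ 0 := by
  intro h0
  have := congrArg (coeff 1) h0
  rw [map_sub, coeff_one_expOf (by simp [hg]), coeff_one_expOf (by simp [hg]), coeff_C_mul,
    coeff_C_mul, ← sub_mul, map_zero] at this
  exact mul_ne_zero (sub_ne_zero.mpr hab) hg1 this

section OddPart

variable {K : Type*} [Field K]

noncomputable def oddPart (W : K⟦X⟧) : K⟦X⟧ := C (1 / 2) * (W - rescale (-1) W)

theorem constantCoeff_oddPart (W : K⟦X⟧) : constantCoeff (oddPart W) = 0 := by
  rw [oddPart, ← coeff_zero_eq_constantCoeff_apply, coeff_C_mul, map_sub, coeff_rescale]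
  simp

theorem coeff_one_oddPart [CharZero K] (W : K⟦X⟧) : coeff 1 (oddPart W) = coeff 1 W := by
  rw [oddPart, coeff_C_mul, map_sub, coeff_rescale]
  ring

theorem eq_rescale_neg_one_add_two_mul_oddPart [CharZero K] (W : K⟦X⟧) :
    W = rescale (-1) W + C 2 * oddPart W := by
  rw [oddPart, ← mul_assoc, ← map_mul, mul_one_div_cancel two_ne_zero, map_one]
  ring

end OddPart

end PowerSeries

theorem pcomp_eq_subst {g : ℂ⟦X⟧} (hg : constantCoeff g = 0) (f : ℂ⟦X⟧) :
    pcomp f g = f.subst g := by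
  ext m
  rw [pcomp, coeff_mk, coeff_subst_eq_sum hg]

theorem constantCoeff_logOneAdd (a : ℂ) : constantCoeff (logOneAdd a) = 0 := by
  simp [← coeff_zero_eq_constantCoeff_apply, logOneAdd]

theorem coeff_one_logOneAdd (a : ℂ) : coeff 1 (logOneAdd a) = a := by
  simp [logOneAdd]

theorem logOneAdd_eq_rescale_log (a : ℂ) : logOneAdd a = rescale a (log ℂ) := by
  ext n
  rcases eq_or_ne n 0 with rfl | hn
  · simp [logOneAdd]
  · simp [logOneAdd, hn]
    ring

theorem expOf_logOneAdd (a : ℂ) : expOf (logOneAdd a) = 1 + C a * X := by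
  rw [logOneAdd_eq_rescale_log, ← rescale_expOf constantCoeff_log, expOf_log, map_add, map_one,
    rescale_X]

theorem subst_expc {Y : ℂ⟦X⟧} (hY : constantCoeff Y = 0) (c : ℂ) :
    (expc c).subst Y = expOf (C c * Y) := by
  have hc : expc c = rescale c (exp ℂ) := by
    ext n
    simp [expc]
    ring
  have hY' := HasSubst.of_constantCoeff_zero' hY
  rw [hc, rescale_eq_subst, subst_comp_subst_apply (HasSubst.smul_X' c) hY', subst_smul hY',
    subst_X hY', smul_eq_C_mul, expOf]

theorem coeff_one_C_mul_logOneAdd_sub {p q s : ℂ} (hp : p ≠ 0) (hs : s ≠ 0)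
    (hsq : s ^ 2 = p + q) : coeff 1 (C (s / p) * (logOneAdd s - logOneAdd (q / s))) = 1 := by
  rw [coeff_C_mul, map_sub, coeff_one_logOneAdd, coeff_one_logOneAdd]
  field_simp
  linear_combination hsq

theorem logOneAdd_eq_C_mul_add_C_mul {p q s : ℂ} (hp : p ≠ 0) (hq : q ≠ 0) (hs : s ≠ 0)
    (hsq : s ^ 2 = p + q) {x y : ℂ⟦X⟧}
    (hx : x = C ((p + q) / (p * q)) * logOneAdd (q / s) - C (1 / p) * logOneAdd s)
    (hy : y = C (s / p) * (logOneAdd s - logOneAdd (q / s))) :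
    logOneAdd s = C q * x + C s * y ∧ logOneAdd (q / s) = C q * x + C (q / s) * y := by
  subst hx hy
  constructor <;> ext n <;> simp only [map_add, map_sub, coeff_C_mul] <;> field_simp
  · linear_combination (coeff n (logOneAdd (q / s)) - coeff n (logOneAdd s)) * hsq
  · ring

theorem one_add_C_mul_eq_expOf_mul_expOf {a : ℂ} {h x y : ℂ⟦X⟧} (hh : constantCoeff h = 0)
    (hy : constantCoeff y = 0) (hL : logOneAdd a = x + C a * y) :
    1 + C a * h = expOf (x.subst h) * expOf (C a * y.subst h) := by
  have hh' := HasSubst.of_constantCoeff_zero' hh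
  have hx : constantCoeff x = 0 := by
    simpa [hy, constantCoeff_logOneAdd] using (congrArg constantCoeff hL).symm
  have hCy : constantCoeff (C a * y.subst h) = 0 := by
    rw [map_mul, constantCoeff_subst_of_constantCoeff_eq_zero hh, hy, mul_zero]
  calc 1 + C a * h = (1 + C a * X).subst h := by
        rw [subst_add hh', subst_one, subst_C_mul hh, subst_X hh']
    _ = expOf ((logOneAdd a).subst h) := by
        rw [← expOf_logOneAdd, subst_expOf (constantCoeff_logOneAdd a) hh]
    _ = expOf (x.subst h + C a * y.subst h) := by
        rw [hL, subst_add hh', subst_C_mul hh]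
    _ = _ := expOf_add (by rwa [constantCoeff_subst_of_constantCoeff_eq_zero hh]) hCy

theorem one_add_C_mul_eq_of_logOneAdd_eq {a q : ℂ} {h x y Y : ℂ⟦X⟧}
    (hh : constantCoeff h = 0) (hy : constantCoeff y = 0) (hL : logOneAdd a = C q * x + C a * y)
    (hx : x.subst h = C (1 / 2) * X ^ 2) (hY : Y = oddPart (y.subst h)) :
    1 + C a * h = expOf (C q * (C (1 / 2) * X ^ 2)) * expOf (C a * rescale (-1) (y.subst h)) *
        expOf (C (2 * a) * Y) ∧
      1 + C a * rescale (-1) h =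
        expOf (C q * (C (1 / 2) * X ^ 2)) * expOf (C a * rescale (-1) (y.subst h)) := by
  have hW : constantCoeff (y.subst h) = 0 := by
    rw [constantCoeff_subst_of_constantCoeff_eq_zero hh, hy]
  have hV : constantCoeff (rescale (-1) (y.subst h)) = 0 := by
    rw [← coeff_zero_eq_constantCoeff_apply, coeff_rescale, coeff_zero_eq_constantCoeff_apply, hW,
      mul_zero]
  have hG : constantCoeff (C q * (C (1 / 2) * X ^ 2 : ℂ⟦X⟧)) = 0 := by simp
  have key := one_add_C_mul_eq_expOf_mul_expOf (a := a) hh hy hL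
  rw [subst_C_mul hh, hx] at key
  constructor
  · have hCV : constantCoeff (C a * rescale (-1) (y.subst h)) = 0 := by simp [hV]
    have hCY : constantCoeff (C (2 * a) * Y) = 0 := by
      rw [map_mul, hY, constantCoeff_oddPart, mul_zero]
    rw [key, mul_assoc, ← expOf_add hCV hCY, hY, mul_comm 2 a, map_mul]
    congr 2
    nth_rw 1 [eq_rescale_neg_one_add_two_mul_oddPart (y.subst h)]
    ring
  · have hCW : constantCoeff (C a * y.subst h) = 0 := by simp [hW]
    have := congrArg (rescale (-1 : ℂ)) key
    rw [map_add, map_one, rescale_C_mul, map_mul, rescale_expOf hG, rescale_expOf hCW,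
      rescale_C_mul, rescale_C_mul, rescale_C_mul, map_pow, rescale_neg_one_X, neg_sq] at this
    exact this

theorem mul_sub_eq_of_factorizations {R : Type*} [CommRing R] {p q s t h h' P Φ Ψ α β : R}
    (hst : s * t = q) (hss : s * s = p + q)
    (hs : 1 + s * h = P * Φ * β) (ht : 1 + t * h = P * Ψ * α)
    (hs' : 1 + s * h' = P * Φ) (ht' : 1 + t * h' = P * Ψ) :
    q * s * h * (β - α) = p * β * (α - 1) - q * (β - α) := by
  have key : q * α * (β - 1) * (1 + s * h) = s * s * β * (α - 1) * (1 + t * h) := by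
    rw [hs, ht]
    -- `q·P·Φ·(β - 1) - s²·P·Ψ·(α - 1) = s·(h - h')·(q - s·t) = 0`
    linear_combination
      -(α * β) * (q * hs - q * hs' - s * s * ht + s * s * ht' + s * (h - h') * hst)
  linear_combination key + (β * (α - 1)) * hss + (s * β * (α - 1) * h) * hst

theorem h_mul_eq {p q s : ℂ} (hp : p ≠ 0) (hq : q ≠ 0) (hs : s ≠ 0) (hsq : s ^ 2 = p + q)
    {f h y₁ Y : ℂ⟦X⟧} (hh : constantCoeff h = 0) (hfh : f.subst h = X)
    (hfx : C ((1 : ℂ) / 2) * f ^ 2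
      = C ((p + q) / (p * q)) * logOneAdd (q / s) - C (1 / p) * logOneAdd s)
    (hy1 : y₁ = C (s / p) * (logOneAdd s - logOneAdd (q / s)))
    (hY : Y = oddPart (y₁.subst h)) :
    C q * C s * h * (expOf (C (2 * s) * Y) - expOf (C (2 * q / s) * Y)) =
      C p * expOf (C (2 * s) * Y) * (expOf (C (2 * q / s) * Y) - 1) -
        C q * (expOf (C (2 * s) * Y) - expOf (C (2 * q / s) * Y)) := by
  have hx : (C (1 / 2) * f ^ 2).subst h = C (1 / 2) * X ^ 2 := by
    rw [subst_C_mul hh, subst_pow (HasSubst.of_constantCoeff_zero' hh), hfh]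
  have hy : constantCoeff y₁ = 0 := by simp [hy1, constantCoeff_logOneAdd]
  obtain ⟨hLs, hLt⟩ := logOneAdd_eq_C_mul_add_C_mul hp hq hs hsq hfx hy1
  obtain ⟨hs₁, hs₂⟩ := one_add_C_mul_eq_of_logOneAdd_eq hh hy hLs hx hY
  obtain ⟨ht₁, ht₂⟩ := one_add_C_mul_eq_of_logOneAdd_eq hh hy hLt hx hY
  have hst : C s * C (q / s) = (C q : ℂ⟦X⟧) := by rw [← map_mul]; field_simp
  have hss : C s * C s = (C p + C q : ℂ⟦X⟧) := by rw [← map_mul, ← map_add, ← hsq, sq]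
  rw [mul_div_assoc]
  exact mul_sub_eq_of_factorizations hst hss hs₁ ht₁ hs₂ ht₂

theorem htilde_subst_mul_eq {p q s : ℂ} (hq : q ≠ 0) (hs : s ≠ 0) (hsq : s ^ 2 = p + q)
    {htilde Y : ℂ⟦X⟧} (hY : constantCoeff Y = 0)
    (hht : htilde * (1 - expc (-2 * p / s))
      = C (p / (q * s)) * (expc (2 * q / s) - 1) - C (1 / s) * (1 - expc (-2 * p / s))) :
    C q * C s * htilde.subst Y * (expOf (C (2 * s) * Y) - expOf (C (2 * q / s) * Y)) =
      C p * expOf (C (2 * s) * Y) * (expOf (C (2 * q / s) * Y) - 1) -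
        C q * (expOf (C (2 * s) * Y) - expOf (C (2 * q / s) * Y)) := by
  have hY' := HasSubst.of_constantCoeff_zero' hY
  have hK := congrArg (subst Y) hht
  rw [subst_mul hY', subst_sub hY', subst_sub hY', subst_C_mul hY, subst_C_mul hY, subst_sub hY',
    subst_sub hY', subst_one Y, subst_expc hY, subst_expc hY] at hK
  have he : expOf (C (-2 * p / s) * Y) * expOf (C (2 * s) * Y) = expOf (C (2 * q / s) * Y) := by
    rw [expOf_C_mul_mul_expOf_C_mul hY]
    congr 3
    field_simp
    linear_combination hsq
  have h₁ : C q * C s * C (p / (q * s)) = (C p : ℂ⟦X⟧) := by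
    rw [← map_mul, ← map_mul]; field_simp
  have h₂ : C q * C s * C (1 / s) = (C q : ℂ⟦X⟧) := by
    rw [← map_mul, ← map_mul]; field_simp
  linear_combination (C q * C s * expOf (C (2 * s) * Y)) * hK
    + (C q * C s * htilde.subst Y + C q) * he
    + (expOf (C (2 * s) * Y) * (expOf (C (2 * q / s) * Y) - 1)) * h₁
    - (expOf (C (2 * s) * Y) - expOf (C (-2 * p / s) * Y) * expOf (C (2 * s) * Y)) * h₂

theorem f_htilde_inverse_of_Y_general
    (p q s : ℂ) (hp : p ≠ 0) (hq : q ≠ 0) (hs : s ≠ 0) (hsq : s^2 = p + q)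
    (f h htilde : PowerSeries ℂ)
    (hfx : C ((1:ℂ)/2) * f^2
      = C ((p + q)/(p*q)) * logOneAdd (q/s) - C (1/p) * logOneAdd s)
    (hh0 : coeff 0 h = 0)
    (hfh : pcomp f h = X)
    (hht : htilde * (1 - expc (-2*p/s))
      = C (p/(q*s)) * (expc (2*q/s) - 1) - C (1/s) * (1 - expc (-2*p/s)))
    (y₁ Y : PowerSeries ℂ)
    (hy1 : y₁ = C (s/p) * (logOneAdd s - logOneAdd (q/s)))
    (hY : Y = C ((1:ℂ)/2) * (pcomp y₁ h - rescale (-1) (pcomp y₁ h))) :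
    pcomp f (pcomp htilde Y) = X := by
  have hh : constantCoeff h = 0 := by rwa [← coeff_zero_eq_constantCoeff_apply]
  change Y = oddPart (pcomp y₁ h) at hY
  rw [pcomp_eq_subst hh] at hY hfh
  have hY0 : constantCoeff Y = 0 := by rw [hY, constantCoeff_oddPart]
  have hY1 : coeff 1 Y ≠ 0 := by
    rw [hY, coeff_one_oddPart, coeff_one_subst hh, hy1, coeff_one_C_mul_logOneAdd_sub hp hs hsq,
      one_mul]
    exact coeff_one_ne_zero_of_subst_eq_X hh hfh
  have hD : C q * C s * (expOf (C (2 * s) * Y) - expOf (C (2 * q / s) * Y)) ≠ 0 := by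
    refine mul_ne_zero (mul_ne_zero ?_ ?_) (expOf_C_mul_sub_expOf_C_mul_ne_zero hY0 hY1 ?_)
    · simpa using hq
    · simpa using hs
    · intro heq
      field_simp at heq
      exact hp (by linear_combination heq - hsq)
  have hK : htilde.subst Y = h := by
    refine mul_right_cancel₀ hD ?_
    linear_combination
      htilde_subst_mul_eq hq hs hsq hY0 hht - h_mul_eq hp hq hs hsq hh hfh hfx hy1 hY
  rw [pcomp_eq_subst hY0, hK, pcomp_eq_subst hh, hfh]

/-- With `s = √(p+q)` (`p, q, p+q ≠ 0`), let
`x(z) = ((p+q)/(pq)) log(1+qz/s) - (1/p) log(1+sz)`,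
`f(z) = z + …` the series with `f² = 2x`, `h` its compositional inverse,
`y₁(z) = (s/p)(log(1+sz) - log(1+qz/s))`,
`Y(z) = ½(y₁(h(z)) - y₁(h(-z)))` the odd part of `y₁(h(z))`, and
`h̃(z) = (p/(qs))(e^{2qz/s}-1)/(1-e^{-2pz/s}) - 1/s`.
Then `f(h̃(Y(z))) = z`, i.e. `f ∘ h̃` is the compositional inverse of `Y`. -/
theorem f_htilde_inverse_of_Y
    (p q s : ℂ) (hp : p ≠ 0) (hq : q ≠ 0) (hs : s ≠ 0) (hsq : s^2 = p + q)
    (f h htilde : PowerSeries ℂ)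
    (hf0 : coeff 0 f = 0) (hf1 : coeff 1 f = 1)
    (hfx : C ((1:ℂ)/2) * f^2
      = C ((p + q)/(p*q)) * logOneAdd (q/s) - C (1/p) * logOneAdd s)
    (hh0 : coeff 0 h = 0)
    (hfh : pcomp f h = X) (hhf : pcomp h f = X)
    (hht : htilde * (1 - expc (-2*p/s))
      = C (p/(q*s)) * (expc (2*q/s) - 1) - C (1/s) * (1 - expc (-2*p/s)))
    (y₁ Y : PowerSeries ℂ)
    (hy1 : y₁ = C (s/p) * (logOneAdd s - logOneAdd (q/s)))
    (hY : Y = C ((1:ℂ)/2) * (pcomp y₁ h - rescale (-1) (pcomp y₁ h))) :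
    pcomp f (pcomp htilde Y) = X :=
  f_htilde_inverse_of_Y_general p q s hp hq hs hsq f h htilde hfx hh0 hfh hht y₁ Y hy1 hY
end
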